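/- arXiv:2105.03101 — 8 statements merged into one kernel-verified Lean document; each statement's English description precedes it below -/
import Mathlib

section
/- Marshall's inequality: Let I ⊆ ℝ be an interval, f : I → ℝ a function admitting a greatest convex minorant g, and h : I → ℝ any convex function with sup_{x ∈ I} |f(x) − h(x)| < ∞. Then sup_{x ∈ I} |g(x) − h(x)| ≤ sup_{x ∈ I} |f(x) − h(x)|. -/
/-- `g` is the greatest convex minorant of `f` on the set `I`. -/
def IsGCM (I : Set ℝ) (f g : ℝ → ℝ) : Prop :=
  ConvexOn ℝ I g ∧ (∀ x ∈ I, g x ≤ f x) ∧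
    ∀ g' : ℝ → ℝ, ConvexOn ℝ I g' → (∀ x ∈ I, g' x ≤ f x) → ∀ x ∈ I, g' x ≤ g x

/-- **Marshall's inequality**: if `g` is the greatest convex minorant of `f` on an interval `I`
and `h` is convex on `I` with `sup_{x ∈ I} |f x - h x| < ∞`, then
`sup_{x ∈ I} |g x - h x| ≤ sup_{x ∈ I} |f x - h x|`. -/
theorem marshall_inequality (I : Set ℝ) (hI : I.OrdConnected)
    (f g h : ℝ → ℝ) (hGCM : IsGCM I f g) (hconv : ConvexOn ℝ I h)
    (hbdd : BddAbove ((fun x => |f x - h x|) '' I)) :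
    ∀ x ∈ I, |g x - h x| ≤ sSup ((fun x => |f x - h x|) '' I) := by
  obtain ⟨hgconv, hgle, hgmax⟩ := hGCM
  set M := sSup ((fun x => |f x - h x|) '' I) with hM
  have hle : ∀ x ∈ I, |f x - h x| ≤ M := fun x hx =>
    le_csSup hbdd ⟨x, hx, rfl⟩
  have hconv' : ConvexOn ℝ I (fun x => h x - M) := hconv.sub (concaveOn_const M (hconv.1))
  have hlef : ∀ x ∈ I, h x - M ≤ f x := fun x hx => by
    have := (abs_le.mp (hle x hx)).1
    linarith
  have hleg := hgmax _ hconv' hlef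
  intro x hx
  have h1 := hleg x hx
  have h2 := hgle x hx
  have h3 := (abs_le.mp (hle x hx)).2
  rw [abs_le]
  constructor <;> linarith
end

section
/- Let t₁ < ⋯ < t_k be real numbers and f : [t₁, t_k] → ℝ a piecewise linear function that is affine on each interval [t_i, t_{i+1}], and let g be the greatest convex minorant of f on [t₁, t_k]. Then the vector of right-hand slopes of g at t₁, …, t_{k−1} equals the isotonic regression of the slopes s_i = [f(t_{i+1}) − f(t_i)] / [t_{i+1} − t_i] with weights t_{i+1} − t_i, i.e. it is the unique minimizer of Σ_{i=1}^{k−1} (t_{i+1} − t_i)(θ_i − s_i)² over all vectors (θ₁, …, θ_{k−1}) with θ₁ ≤ ⋯ ≤ θ_{k−1}. -/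
open Set

theorem ConvexOn.update_of_mem_extremePoints {𝕜 E β : Type*} [Semiring 𝕜] [PartialOrder 𝕜]
    [AddCommMonoid E] [Module 𝕜 E] [DecidableEq E] [AddCommMonoid β] [PartialOrder β]
    [IsOrderedAddMonoid β] [Module 𝕜 β] [PosSMulMono 𝕜 β] {s : Set E} {g : E → β} {c : E}
    {v : β} (hg : ConvexOn 𝕜 s g) (hc : c ∈ extremePoints 𝕜 s) (hv : g c ≤ v) :
    ConvexOn 𝕜 s (Function.update g c v) := by
  have hle : ∀ z, g z ≤ Function.update g c v z := fun z => by
    rcases eq_or_ne z c with rfl | hz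
    · simpa
    · simp [hz]
  refine convexOn_iff_forall_pos.2 ⟨hg.1, fun x hx y hy a b ha hb hab => ?_⟩
  by_cases hxy : a • x + b • y = c
  · obtain ⟨rfl, rfl⟩ := (mem_extremePoints.1 hc).2 x hx y hy ⟨a, b, ha, hb, hab, hxy⟩
    simp [hxy, ← add_smul, hab]
  · rw [Function.update_of_ne hxy]
    calc g (a • x + b • y) ≤ a • g x + b • g y := hg.2 hx hy ha.le hb.le hab
      _ ≤ _ := add_le_add (smul_le_smul_of_nonneg_left (hle x) ha.le)
          (smul_le_smul_of_nonneg_left (hle y) hb.le)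

theorem add_slope_mul_sub_self {𝕜 : Type*} [Field 𝕜] (g : 𝕜 → 𝕜) (a b : 𝕜) :
    g a + slope g a b * (b - a) = g b := by
  simpa [mul_comm, add_comm] using sub_smul_slope_vadd g a b

theorem sub_mul_slope_sub_div (f g : ℝ → ℝ) (a b : ℝ) :
    (b - a) * (slope g a b - (f b - f a) / (b - a)) = (g b - f b) - (g a - f a) := by
  rw [← slope_def_field, mul_sub, ← smul_eq_mul, sub_smul_slope, ← smul_eq_mul, sub_smul_slope,
    vsub_eq_sub, vsub_eq_sub]
  ring

section Chord

variable {𝕜 : Type*} [Field 𝕜] [LinearOrder 𝕜] [IsStrictOrderedRing 𝕜] {s : Set 𝕜}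
  {f g : 𝕜 → 𝕜} {a b x : 𝕜}

theorem convexOn_add_mul_sub (hs : Convex 𝕜 s) (c m a : 𝕜) :
    ConvexOn 𝕜 s fun x => c + m * (x - a) :=
  (((LinearMap.mul 𝕜 𝕜 m).convexOn hs).add_const (c - m * a)).congr fun x _ => by
    simp only [Pi.add_apply, LinearMap.mul_apply_apply]; ring

theorem concaveOn_mul_add (hs : Convex 𝕜 s) (m c : 𝕜) : ConcaveOn 𝕜 s fun x => m * x + c :=
  ((LinearMap.mul 𝕜 𝕜 m).concaveOn hs).add_const c

theorem ConvexOn.le_add_slope_mul_sub (hg : ConvexOn 𝕜 s g) (ha : a ∈ s) (hb : b ∈ s)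
    (hx : x ∈ Icc a b) : g x ≤ g a + slope g a b * (x - a) := by
  rcases hx.1.eq_or_lt with rfl | hax
  · simp
  have hslope := hg.slope_mono ha ⟨hg.1.ordConnected.out ha hb hx, hax.ne'⟩
    ⟨hb, (hax.trans_le hx.2).ne'⟩ hx.2
  rw [slope_def_field g a x, div_le_iff₀ (sub_pos.2 hax)] at hslope
  linarith

theorem ConvexOn.add_slope_mul_sub_le (hg : ConvexOn 𝕜 s g) (ha : a ∈ s) (hb : b ∈ s)
    (hx : x ∈ s) (hab : a < b) (hxab : x ∉ Ioo a b) : g a + slope g a b * (x - a) ≤ g x := by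
  rcases lt_trichotomy x a with hxa | rfl | hax
  · have hslope := hg.slope_mono ha ⟨hx, hxa.ne⟩ ⟨hb, hab.ne'⟩ (hxa.trans hab).le
    rw [slope_def_field g a x, div_le_iff_of_neg (sub_neg.2 hxa)] at hslope
    linarith
  · simp
  · have hbx : b ≤ x := not_lt.1 fun hxb => hxab ⟨hax, hxb⟩
    have hslope := hg.slope_mono ha ⟨hb, hab.ne'⟩ ⟨hx, hax.ne'⟩ hbx
    rw [slope_def_field g a x, le_div_iff₀ (sub_pos.2 hax)] at hslope
    linarith

theorem ConcaveOn.le_of_convexOn_of_mem_Icc (hf : ConcaveOn 𝕜 (Icc a b) f)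
    (hg : ConvexOn 𝕜 (Icc a b) g) (ha : g a ≤ f a) (hb : g b ≤ f b) (hx : x ∈ Icc a b) :
    g x ≤ f x := by
  have hab := hx.1.trans hx.2
  have hmin := (hf.sub hg).min_le_of_mem_Icc (left_mem_Icc.2 hab) (right_mem_Icc.2 hab) hx
  simp only [Pi.sub_apply] at hmin
  linarith [le_min (sub_nonneg.2 ha) (sub_nonneg.2 hb)]

end Chord

theorem HasDerivWithinAt.eq_of_eq_add_mul_sub_on_Icc {g : ℝ → ℝ} {θ m a b : ℝ}
    (hg : HasDerivWithinAt g θ (Ici a) a) (hab : a < b)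
    (hg_affine : ∀ y ∈ Icc a b, g y = g a + m * (y - a)) : θ = m := by
  have hline : HasDerivWithinAt (fun y => g a + m * (y - a)) m (Ici a) a := by
    simpa using ((((hasDerivAt_id a).sub_const a).const_mul m).const_add (g a)).hasDerivWithinAt
  exact (uniqueDiffOn_Ici a a self_mem_Ici).eq_deriv _ hg <|
    hline.congr_of_eventuallyEq (Filter.eventuallyEq_of_mem (Icc_mem_nhdsGE hab) hg_affine)
      (by simp)

namespace IsGCM

variable {I : Set ℝ} {f g : ℝ → ℝ}

theorem eq_of_mem_extremePoints (h : IsGCM I f g) {c : ℝ} (hc : c ∈ extremePoints ℝ I) :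
    g c = f c := by
  classical
  obtain ⟨hg, hgf, hmax⟩ := h
  have hupdate_le : ∀ x ∈ I, Function.update g c (f c) x ≤ f x := fun x hx => by
    rcases eq_or_ne x c with rfl | hxc
    · simp
    · simpa [hxc] using hgf x hx
  have hupdate := hmax _ (hg.update_of_mem_extremePoints hc (hgf c hc.1)) hupdate_le c hc.1
  exact le_antisymm (hgf c hc.1) (by simpa using hupdate)

theorem eq_add_slope_mul_sub (h : IsGCM I f g) {a b x : ℝ} (ha : a ∈ I) (hb : b ∈ I)
    (hab : a < b) (hf : ConcaveOn ℝ (Icc a b) f) (hx : x ∈ Icc a b) :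
    g x = g a + slope g a b * (x - a) := by
  obtain ⟨hg, hgf, hmax⟩ := h
  have hchord_le : ∀ y ∈ I, g a + slope g a b * (y - a) ≤ f y := fun y hy => by
    by_cases hy' : y ∈ Icc a b
    · refine hf.le_of_convexOn_of_mem_Icc (convexOn_add_mul_sub (convex_Icc a b) _ _ _)
        ?_ ?_ hy'
      · simpa using hgf a ha
      · simpa [add_slope_mul_sub_self] using hgf b hb
    · exact (hg.add_slope_mul_sub_le ha hb hy hab fun h => hy' (Ioo_subset_Icc_self h)).trans
        (hgf y hy)
  exact le_antisymm (hg.le_add_slope_mul_sub ha hb hx)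
    (hmax _ (convexOn_add_mul_sub hg.1 _ _ _) hchord_le x (hg.1.ordConnected.out ha hb hx))

theorem eq_slope_of_hasDerivWithinAt (h : IsGCM I f g) {a b θ : ℝ} (ha : a ∈ I) (hb : b ∈ I)
    (hab : a < b) (hf : ConcaveOn ℝ (Icc a b) f)
    (hθ : HasDerivWithinAt g θ (Ici a) a) : θ = slope g a b :=
  hθ.eq_of_eq_add_mul_sub_on_Icc hab fun _ hy => h.eq_add_slope_mul_sub ha hb hab hf hy

theorem le_of_le_of_notMem_Ioo (h : IsGCM I f g) {a b c : ℝ} (ha : a ∈ I) (hb : b ∈ I)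
    (hac : a ≤ c) (hcb : c ≤ b) (hfac : ConcaveOn ℝ (Icc a c) f)
    (hfcb : ConcaveOn ℝ (Icc c b) f) {m : ℝ → ℝ} (hm : ConvexOn ℝ I m)
    (hmg : ∀ y ∈ I, y ∉ Ioo a b → m y ≤ g y) (hmc : m c ≤ f c) {x : ℝ} (hx : x ∈ I) :
    m x ≤ g x := by
  obtain ⟨hg, hgf, hmax⟩ := h
  have hc : c ∈ I := hg.1.ordConnected.out ha hb ⟨hac, hcb⟩
  have hm_Icc : ∀ {p q}, p ∈ I → q ∈ I → ConvexOn ℝ (Icc p q) m := fun hp hq =>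
    hm.subset (hg.1.ordConnected.out hp hq) (convex_Icc _ _)
  have hmf : ∀ y ∈ I, y ∉ Ioo a b → m y ≤ f y := fun y hy hy' =>
    (hmg y hy hy').trans (hgf y hy)
  refine hmax m hm (fun y hy => ?_) x hx
  rcases lt_or_ge y a with hya | hay
  · exact hmf y hy fun h => hya.not_ge h.1.le
  rcases le_or_gt y c with hyc | hcy
  · exact hfac.le_of_convexOn_of_mem_Icc (hm_Icc ha hc) (hmf a ha fun h => h.1.false) hmc
      ⟨hay, hyc⟩
  rcases le_or_gt y b with hyb | hby
  · exact hfcb.le_of_convexOn_of_mem_Icc (hm_Icc hc hb) hmc (hmf b hb fun h => h.2.false)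
      ⟨hcy.le, hyb⟩
  · exact hmf y hy fun h => hby.not_ge h.2.le

theorem slope_le_slope_of_lt (h : IsGCM I f g) {a b c : ℝ} (ha : a ∈ I) (hb : b ∈ I)
    (hac : a < c) (hcb : c < b) (hfac : ConcaveOn ℝ (Icc a c) f)
    (hfcb : ConcaveOn ℝ (Icc c b) f) (hgf : g c < f c) : slope g c b ≤ slope g a c := by
  have hc : c ∈ I := h.1.1.ordConnected.out ha hb ⟨hac.le, hcb.le⟩
  by_contra! hkink
  set ℓ := fun y => g a + slope g a b * (y - a) with hℓ
  have hgℓ : g c < ℓ c := by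
    have hac' := add_slope_mul_sub_self g a c
    have hcb' := add_slope_mul_sub_self g c b
    have hab' := add_slope_mul_sub_self g a b
    have hslope_lt : slope g a c < slope g a b := by
      nlinarith [mul_lt_mul_of_pos_left hkink (sub_pos.2 hcb)]
    simp only [hℓ]
    nlinarith [mul_lt_mul_of_pos_left hslope_lt (sub_pos.2 hac)]
  -- The chord of `g` over `[a, b]`, lowered just enough to stay below `f` at `c`, still lies
  -- strictly above `g` at `c`.
  set m := fun y => ℓ y - max 0 (ℓ c - f c) with hm
  have hm_conv : ConvexOn ℝ I m :=
    (convexOn_add_mul_sub h.1.1 (g a - max 0 (ℓ c - f c)) (slope g a b) a).congr fun y _ => by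
      simp only [hm, hℓ]; ring
  have hmg : ∀ y ∈ I, y ∉ Ioo a b → m y ≤ g y := fun y hy hy' =>
    (sub_le_self _ (le_max_left _ _)).trans
      (h.1.add_slope_mul_sub_le ha hb hy (hac.trans hcb) hy')
  have hmc : m c ≤ f c := by simp only [hm]; linarith [le_max_right 0 (ℓ c - f c)]
  have hgm : g c < m c := by
    simp only [hm]
    linarith [max_lt (sub_pos.2 hgℓ) (show ℓ c - f c < ℓ c - g c by linarith)]
  exact absurd (h.le_of_le_of_notMem_Ioo ha hb hac.le hcb.le hfac hfcb hm_conv hmg hmc hc)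
    (not_le.2 hgm)

theorem sub_mul_slope_sub_slope_eq_zero (h : IsGCM I f g) {a b c : ℝ} (ha : a ∈ I) (hb : b ∈ I)
    (hac : a < c) (hcb : c < b) (hfac : ConcaveOn ℝ (Icc a c) f)
    (hfcb : ConcaveOn ℝ (Icc c b) f) : (g c - f c) * (slope g c b - slope g a c) = 0 := by
  rcases (h.2.1 c (h.1.1.ordConnected.out ha hb ⟨hac.le, hcb.le⟩)).eq_or_lt with hgf | hgf
  · rw [hgf, sub_self, zero_mul]
  · have hconvex := h.1.slope_mono_adjacent ha hb hac hcb
    rw [← slope_def_field, ← slope_def_field] at hconvex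
    rw [le_antisymm (h.slope_le_slope_of_lt ha hb hac hcb hfac hfcb hgf) hconvex, sub_self,
      mul_zero]

theorem eq_at_endpoints {a b : ℝ} (h : IsGCM (Icc a b) f g) (hab : a ≤ b) :
    g a = f a ∧ g b = f b :=
  ⟨h.eq_of_mem_extremePoints (by simp [hab]), h.eq_of_mem_extremePoints (by simp [hab])⟩

end IsGCM

theorem mem_Icc_of_lt_succ {k : ℕ} {t : ℕ → ℝ} (ht : ∀ i, i + 1 < k → t i < t (i + 1)) {i : ℕ}
    (hi : i ≤ k - 1) : t i ∈ Icc (t 0) (t (k - 1)) := by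
  have ht_mono : MonotoneOn t (Iic (k - 1)) :=
    (strictMonoOn_Iic_of_lt_succ fun i hi => by simpa using ht i (by omega)).monotoneOn
  exact ⟨ht_mono (Nat.zero_le _) hi (Nat.zero_le i), ht_mono hi self_mem_Iic hi⟩

theorem ConvexOn.slope_le_slope_of_lt_succ {k : ℕ} {t : ℕ → ℝ} {g : ℝ → ℝ}
    (hg : ConvexOn ℝ (Icc (t 0) (t (k - 1))) g) (ht : ∀ i, i + 1 < k → t i < t (i + 1))
    {i j : ℕ} (hij : i ≤ j) (hj : j + 1 < k) :
    slope g (t i) (t (i + 1)) ≤ slope g (t j) (t (j + 1)) := by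
  have hmono : MonotoneOn (fun i => slope g (t i) (t (i + 1))) (Iio (k - 1)) :=
    monotoneOn_of_le_succ ordConnected_Iio fun i _ hi hi' => by
      simp only [mem_Iio, Order.succ_eq_add_one] at hi hi' ⊢
      rw [slope_def_field, slope_def_field]
      exact hg.slope_mono_adjacent (mem_Icc_of_lt_succ ht (by omega))
        (mem_Icc_of_lt_succ ht (by omega)) (ht i (by omega)) (ht (i + 1) (by omega))
  exact hmono (by simp only [mem_Iio]; omega) (by simp only [mem_Iio]; omega) hij

section IsotonicRegression

open Finset

variable {n : ℕ} {w s θ E ξ : ℕ → ℝ}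

theorem sum_mul_sub_mul_sub_nonneg (hE : ∀ i < n, w i * (θ i - s i) = E (i + 1) - E i)
    (hE0 : E 0 = 0) (hEn : E n = 0) (hE_nonpos : ∀ i, i + 1 < n → E (i + 1) ≤ 0)
    (hslack : ∀ i, i + 1 < n → E (i + 1) * (θ (i + 1) - θ i) = 0)
    (hξ : ∀ i, i + 1 < n → ξ i ≤ ξ (i + 1)) :
    0 ≤ ∑ i ∈ range n, w i * (θ i - s i) * (ξ i - θ i) := by
  have hpartial : ∀ j ≤ n, ∑ i ∈ range j, w i * (θ i - s i) = E j := fun j hj => by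
    rw [sum_congr rfl fun i hi => hE i ((mem_range.1 hi).trans_le hj), sum_range_sub, hE0,
      sub_zero]
  have hparts := sum_range_by_parts (fun i => ξ i - θ i) (fun i => w i * (θ i - s i)) n
  simp only [smul_eq_mul] at hparts
  rw [sum_congr rfl fun i _ => mul_comm _ _, hparts, hpartial n le_rfl, hEn, mul_zero, zero_sub,
    neg_nonneg]
  refine sum_nonpos fun i hi => ?_
  have hi : i + 1 < n := by have := mem_range.1 hi; omega
  rw [hpartial (i + 1) hi.le]
  have hterm : (ξ (i + 1) - θ (i + 1) - (ξ i - θ i)) * E (i + 1)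
      = (ξ (i + 1) - ξ i) * E (i + 1) := by
    linear_combination -hslack i hi
  rw [hterm]
  exact mul_nonpos_of_nonneg_of_nonpos (sub_nonneg.2 (hξ i hi)) (hE_nonpos i hi)

theorem isotonic_regression_of_slackness (hw : ∀ i < n, 0 < w i)
    (hE : ∀ i < n, w i * (θ i - s i) = E (i + 1) - E i)
    (hE0 : E 0 = 0) (hEn : E n = 0) (hE_nonpos : ∀ i, i + 1 < n → E (i + 1) ≤ 0)
    (hslack : ∀ i, i + 1 < n → E (i + 1) * (θ (i + 1) - θ i) = 0)
    (hξ : ∀ i, i + 1 < n → ξ i ≤ ξ (i + 1)) :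
    ∑ i ∈ range n, w i * (θ i - s i) ^ 2 ≤ ∑ i ∈ range n, w i * (ξ i - s i) ^ 2 ∧
      (∑ i ∈ range n, w i * (ξ i - s i) ^ 2 = ∑ i ∈ range n, w i * (θ i - s i) ^ 2 →
        ∀ i < n, ξ i = θ i) := by
  have hexpand : ∑ i ∈ range n, w i * (ξ i - s i) ^ 2 = ∑ i ∈ range n, w i * (θ i - s i) ^ 2
      + 2 * ∑ i ∈ range n, w i * (θ i - s i) * (ξ i - θ i)
      + ∑ i ∈ range n, w i * (ξ i - θ i) ^ 2 := by
    rw [mul_sum, ← sum_add_distrib, ← sum_add_distrib]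
    exact sum_congr rfl fun i _ => by ring
  have hcross := sum_mul_sub_mul_sub_nonneg hE hE0 hEn hE_nonpos hslack hξ
  have hterm_nonneg : ∀ i ∈ range n, 0 ≤ w i * (ξ i - θ i) ^ 2 := fun i hi =>
    mul_nonneg (hw i (mem_range.1 hi)).le (sq_nonneg _)
  refine ⟨by linarith [sum_nonneg hterm_nonneg], fun heq i hi => ?_⟩
  have hzero := (sum_eq_zero_iff_of_nonneg hterm_nonneg).1
    (le_antisymm (by linarith) (sum_nonneg hterm_nonneg)) i (mem_range.2 hi)
  rwa [mul_eq_zero, or_iff_right (hw i hi).ne', sq_eq_zero_iff, sub_eq_zero] at hzero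

end IsotonicRegression

theorem gcm_slopes_eq_isotonic_regression_general (k : ℕ)
    (t : ℕ → ℝ) (ht : ∀ i, i + 1 < k → t i < t (i + 1))
    (f g : ℝ → ℝ)
    (hf_piecewise : ∀ i, i + 1 < k → ∃ α β : ℝ,
      ∀ y ∈ Set.Icc (t i) (t (i + 1)), f y = α * y + β)
    (hGCM : IsGCM (Set.Icc (t 0) (t (k - 1))) f g)
    (θ : ℕ → ℝ)
    (hθ : ∀ i, i + 1 < k → HasDerivWithinAt g (θ i) (Set.Ici (t i)) (t i)) :
    (∀ i j, i ≤ j → j + 1 < k → θ i ≤ θ j) ∧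
    ∀ ξ : ℕ → ℝ, (∀ i j, i ≤ j → j + 1 < k → ξ i ≤ ξ j) →
      (∑ i ∈ Finset.range (k - 1),
          (t (i + 1) - t i) * (θ i - (f (t (i + 1)) - f (t i)) / (t (i + 1) - t i)) ^ 2
        ≤ ∑ i ∈ Finset.range (k - 1),
          (t (i + 1) - t i) * (ξ i - (f (t (i + 1)) - f (t i)) / (t (i + 1) - t i)) ^ 2) ∧
      ((∑ i ∈ Finset.range (k - 1),
          (t (i + 1) - t i) * (ξ i - (f (t (i + 1)) - f (t i)) / (t (i + 1) - t i)) ^ 2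
        = ∑ i ∈ Finset.range (k - 1),
          (t (i + 1) - t i) * (θ i - (f (t (i + 1)) - f (t i)) / (t (i + 1) - t i)) ^ 2) →
        ∀ i, i + 1 < k → ξ i = θ i) := by
  have hmem : ∀ i ≤ k - 1, t i ∈ Icc (t 0) (t (k - 1)) := fun _ => mem_Icc_of_lt_succ ht
  have hconcave : ∀ i, i + 1 < k → ConcaveOn ℝ (Icc (t i) (t (i + 1))) f := fun i hi => by
    obtain ⟨α, β, hαβ⟩ := hf_piecewise i hi
    exact (concaveOn_mul_add (convex_Icc _ _) α β).congr fun y hy => (hαβ y hy).symm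
  have hslope : ∀ i, i + 1 < k → θ i = slope g (t i) (t (i + 1)) := fun i hi =>
    hGCM.eq_slope_of_hasDerivWithinAt (hmem i (by omega)) (hmem (i + 1) (by omega)) (ht i hi)
      (hconcave i hi) (hθ i hi)
  have hmono : ∀ i j, i ≤ j → j + 1 < k → θ i ≤ θ j := fun i j hij hj => by
    rw [hslope i (by omega), hslope j hj]
    exact hGCM.1.slope_le_slope_of_lt_succ ht hij hj
  have hslack : ∀ i, i + 1 < k - 1 →
      (g (t (i + 1)) - f (t (i + 1))) * (θ (i + 1) - θ i) = 0 := fun i hi => by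
    rw [hslope i (by omega), hslope (i + 1) (by omega)]
    exact hGCM.sub_mul_slope_sub_slope_eq_zero (hmem i (by omega)) (hmem (i + 2) (by omega))
      (ht i (by omega)) (ht (i + 1) (by omega)) (hconcave i (by omega))
      (hconcave (i + 1) (by omega))
  obtain ⟨hleft, hright⟩ := hGCM.eq_at_endpoints (hmem 0 (Nat.zero_le _)).2
  refine ⟨hmono, fun ξ hξ => ?_⟩
  obtain ⟨hle, huniq⟩ := isotonic_regression_of_slackness (E := fun i => g (t i) - f (t i))
    (fun i hi => sub_pos.2 (ht i (by omega)))
    (fun i hi => by rw [hslope i (by omega)]; exact sub_mul_slope_sub_div f g _ _)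
    (sub_eq_zero.2 hleft) (sub_eq_zero.2 hright)
    (fun i hi => sub_nonpos.2 (hGCM.2.1 _ (hmem _ (by omega)))) hslack
    (fun i hi => hξ i (i + 1) (by omega) (by omega))
  exact ⟨hle, fun heq i hi => huniq heq i (by omega)⟩

/-- The vector of right-hand slopes of the greatest convex minorant `g` of a piecewise linear
function `f` with knots `t 0 < ⋯ < t (k-1)`, taken at the knots `t 0, …, t (k-2)`, is the
isotonic regression of the slopes `s i = (f (t (i+1)) - f (t i)) / (t (i+1) - t i)` with weights
`t (i+1) - t i`: it is monotone, minimizes the weighted least-squares criterion over all monotone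
vectors, and is the unique such minimizer. -/
theorem gcm_slopes_eq_isotonic_regression (k : ℕ) (hk : 2 ≤ k)
    (t : ℕ → ℝ) (ht : ∀ i, i + 1 < k → t i < t (i + 1))
    (f g : ℝ → ℝ)
    (hf_piecewise : ∀ i, i + 1 < k → ∃ α β : ℝ,
      ∀ y ∈ Set.Icc (t i) (t (i + 1)), f y = α * y + β)
    (hGCM : IsGCM (Set.Icc (t 0) (t (k - 1))) f g)
    (θ : ℕ → ℝ)
    (hθ : ∀ i, i + 1 < k → HasDerivWithinAt g (θ i) (Set.Ici (t i)) (t i)) :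
    (∀ i j, i ≤ j → j + 1 < k → θ i ≤ θ j) ∧
    ∀ ξ : ℕ → ℝ, (∀ i j, i ≤ j → j + 1 < k → ξ i ≤ ξ j) →
      (∑ i ∈ Finset.range (k - 1),
          (t (i + 1) - t i) * (θ i - (f (t (i + 1)) - f (t i)) / (t (i + 1) - t i)) ^ 2
        ≤ ∑ i ∈ Finset.range (k - 1),
          (t (i + 1) - t i) * (ξ i - (f (t (i + 1)) - f (t i)) / (t (i + 1) - t i)) ^ 2) ∧
      ((∑ i ∈ Finset.range (k - 1),
          (t (i + 1) - t i) * (ξ i - (f (t (i + 1)) - f (t i)) / (t (i + 1) - t i)) ^ 2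
        = ∑ i ∈ Finset.range (k - 1),
          (t (i + 1) - t i) * (θ i - (f (t (i + 1)) - f (t i)) / (t (i + 1) - t i)) ^ 2) →
        ∀ i, i + 1 < k → ξ i = θ i) :=
  gcm_slopes_eq_isotonic_regression_general k t ht f g hf_piecewise hGCM θ hθ
end

section
/- Let Z be a real random variable and z₀ > 0, λ > 1 be such that ℙ(|Z| ≥ z) ≤ z^{−λ} for all z ≥ z₀. Then for every γ ≥ z₀, 𝔼[ sup_{z ∈ ℝ} |(z − Z)_+ − (z − t_γ(Z))_+| ] ≤ γ^{−λ+1} / (λ − 1). -/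
open MeasureTheory Set

lemma sup_pospart_diff (a b : ℝ) :
    (⨆ z : ℝ, |max (z - a) 0 - max (z - b) 0|) = |a - b| := by
  have hbd : ∀ z : ℝ, |max (z - a) 0 - max (z - b) 0| ≤ |a - b| := by
    intro z
    calc |max (z - a) 0 - max (z - b) 0| ≤ |(z - a) - (z - b)| :=
          abs_max_sub_max_le_abs _ _ _
      _ = |a - b| := by rw [show (z - a) - (z - b) = -(a - b) by ring, abs_neg]
  apply le_antisymm (ciSup_le hbd)
  have hBdd : BddAbove (Set.range fun z : ℝ => |max (z - a) 0 - max (z - b) 0|) := by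
    refine ⟨|a - b|, ?_⟩
    rintro x ⟨z, rfl⟩
    exact hbd z
  have h := le_ciSup hBdd (max a b)
  refine le_trans (le_of_eq ?_) h
  have h1 : max (max a b - a) 0 = max a b - a := max_eq_left (by simp)
  have h2 : max (max a b - b) 0 = max a b - b := max_eq_left (by simp)
  rw [h1, h2, show (max a b - a) - (max a b - b) = -(a - b) by ring, abs_neg]

lemma abs_sub_trunc (a γ : ℝ) (hγ : 0 ≤ γ) :
    |a - min (max (-γ) a) γ| = max (|a| - γ) 0 := by
  rcases le_total a (-γ) with h | h
  · have ha : a ≤ 0 := le_trans h (by linarith)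
    rw [max_eq_left h, min_eq_left (by linarith), abs_of_nonpos ha,
      abs_of_nonpos (by linarith), max_eq_left (by linarith)]
    ring
  · rcases le_total γ a with h2 | h2
    · rw [max_eq_right (by linarith), min_eq_right h2, abs_of_nonneg (by linarith),
        abs_of_nonneg (by linarith), max_eq_left (by linarith)]
    · rw [max_eq_right h, min_eq_left h2, sub_self, abs_zero,
        max_eq_right (sub_nonpos.mpr (abs_le.mpr ⟨h, h2⟩))]

/-- If `Z` is a real random variable with power tail bound `ℙ(|Z| ≥ z) ≤ z^(-λ)` for all
`z ≥ z₀ > 0`, where `λ > 1`, then for every `γ ≥ z₀`,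
`𝔼[ sup_z |(z - Z)₊ - (z - t_γ(Z))₊| ] ≤ γ^(-λ+1) / (λ - 1)`,
where `t_γ` is truncation at level `γ`. -/
theorem expected_truncation_error_power_tail
    {Ω : Type*} [MeasurableSpace Ω] (μ : Measure Ω) [IsProbabilityMeasure μ]
    (Z : Ω → ℝ) (hZ : Measurable Z) (z₀ lam : ℝ) (hz₀ : 0 < z₀) (hlam : 1 < lam)
    (htail : ∀ z, z₀ ≤ z → μ {ω | z ≤ |Z ω|} ≤ ENNReal.ofReal (z ^ (-lam)))
    (γ : ℝ) (hγ : z₀ ≤ γ) :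
    ∫ ω, (⨆ z : ℝ, |max (z - Z ω) 0 - max (z - min (max (-γ) (Z ω)) γ) 0|) ∂μ
      ≤ γ ^ (-lam + 1) / (lam - 1) := by
  have hγ0 : 0 < γ := lt_of_lt_of_le hz₀ hγ
  have hsup : ∀ ω, (⨆ z : ℝ, |max (z - Z ω) 0 - max (z - min (max (-γ) (Z ω)) γ) 0|)
      = max (|Z ω| - γ) 0 := fun ω => by
    rw [sup_pospart_diff (Z ω) (min (max (-γ) (Z ω)) γ), abs_sub_trunc (Z ω) γ hγ0.le]
  simp only [hsup]
  have hgmeas : Measurable fun ω => max (|Z ω| - γ) 0 :=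
    (hZ.abs.sub measurable_const).max measurable_const
  have hgnn : 0 ≤ᵐ[μ] fun ω => max (|Z ω| - γ) 0 :=
    Filter.Eventually.of_forall fun ω => le_max_right _ _
  rw [integral_eq_lintegral_of_nonneg_ae hgnn hgmeas.aestronglyMeasurable,
    lintegral_eq_lintegral_meas_le μ hgnn hgmeas.aemeasurable]
  have hrpow_meas : Measurable fun t : ℝ => ENNReal.ofReal ((γ + t) ^ (-lam)) :=
    ENNReal.measurable_ofReal.comp ((measurable_const.add measurable_id).pow_const (-lam))
  have hstep : ∫⁻ t in Set.Ioi (0:ℝ), μ {ω | t ≤ max (|Z ω| - γ) 0}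
      ≤ ∫⁻ t in Set.Ioi (0:ℝ), ENNReal.ofReal ((γ + t) ^ (-lam)) := by
    refine setLIntegral_mono hrpow_meas fun t ht => ?_
    have ht0 : 0 < t := ht
    have hset : {ω | t ≤ max (|Z ω| - γ) 0} = {ω | γ + t ≤ |Z ω|} := by
      ext ω
      simp only [Set.mem_setOf_eq, le_max_iff]
      constructor
      · rintro (h | h)
        · linarith
        · linarith
      · intro h; left; linarith
    rw [hset]
    exact htail _ (by linarith)
  have hsub : ∫⁻ t in Set.Ioi (0:ℝ), ENNReal.ofReal ((γ + t) ^ (-lam))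
      = ∫⁻ s in Set.Ioi γ, ENNReal.ofReal (s ^ (-lam)) := by
    have hpre : (fun t : ℝ => γ + t) ⁻¹' Set.Ioi γ = Set.Ioi (0:ℝ) := by
      ext t; simp
    have h := (measurePreserving_add_left volume γ).setLIntegral_comp_preimage_emb
      (Homeomorph.addLeft γ).measurableEmbedding
      (fun s : ℝ => ENNReal.ofReal (s ^ (-lam))) (Set.Ioi γ)
    rw [hpre] at h
    exact h
  have hval : ∫⁻ s in Set.Ioi γ, ENNReal.ofReal (s ^ (-lam))
      = ENNReal.ofReal (γ ^ (-lam + 1) / (lam - 1)) := by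
    rw [← ofReal_integral_eq_lintegral_ofReal
      (integrableOn_Ioi_rpow_of_lt (by linarith) hγ0)
      ((ae_restrict_iff' measurableSet_Ioi).mpr (Filter.Eventually.of_forall fun s hs =>
        Real.rpow_nonneg (le_of_lt (lt_trans hγ0 hs)) _))]
    rw [integral_Ioi_rpow_of_lt (by linarith) hγ0]
    congr 1
    rw [show (-lam + 1 : ℝ) = -(lam - 1) by ring]
    rw [div_neg, neg_div, neg_neg]
  refine ENNReal.toReal_le_of_le_ofReal
    (div_nonneg (Real.rpow_nonneg hγ0.le _) (by linarith)) ?_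
  calc ∫⁻ t in Set.Ioi (0:ℝ), μ {ω | t ≤ max (|Z ω| - γ) 0}
      ≤ ∫⁻ t in Set.Ioi (0:ℝ), ENNReal.ofReal ((γ + t) ^ (-lam)) := hstep
    _ = ENNReal.ofReal (γ ^ (-lam + 1) / (lam - 1)) := by rw [hsub, hval]
end

section
/- Let Z be a real random variable and z₀ > 0, λ > 0 be such that ℙ(|Z| ≥ z) ≤ exp(−λz) for all z ≥ z₀. Then for every γ ≥ z₀, 𝔼[ sup_{z ∈ ℝ} |(z − Z)_+ − (z − t_γ(Z))_+| ] ≤ exp(−λγ)/λ. -/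
open MeasureTheory

private lemma trunc_abs_eq (a γ : ℝ) (hγ : 0 < γ) :
    |a - min (max (-γ) a) γ| = max (|a| - γ) 0 := by
  rcases le_total a (-γ) with h | h
  · rw [max_eq_left h, min_eq_left (by linarith), abs_of_nonpos (by linarith),
      abs_of_nonpos (by linarith), max_eq_left (by linarith)]
    ring
  · rcases le_total a γ with h2 | h2
    · rw [max_eq_right h, min_eq_left h2, sub_self, abs_zero,
        max_eq_right (by rcases abs_cases a with ⟨he, _⟩ | ⟨he, _⟩ <;> linarith)]
    · rw [max_eq_right h, min_eq_right h2, abs_of_nonneg (by linarith),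
        abs_of_nonneg (by linarith), max_eq_left (by linarith)]

private lemma sup_trunc_eq (a γ : ℝ) (hγ : 0 < γ) :
    (⨆ z : ℝ, |max (z - a) 0 - max (z - min (max (-γ) a) γ) 0|) = max (|a| - γ) 0 := by
  set t := min (max (-γ) a) γ with ht
  have hb : ∀ z : ℝ, |max (z - a) 0 - max (z - t) 0| ≤ |a - t| := by
    intro z
    refine (abs_max_sub_max_le_abs _ _ _).trans_eq ?_
    rw [show z - a - (z - t) = -(a - t) by ring, abs_neg]
  apply le_antisymm
  · exact ciSup_le fun z => (hb z).trans_eq (trunc_abs_eq a γ hγ)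
  · have hz : |max (max a t - a) 0 - max (max a t - t) 0| = |a - t| := by
      rw [max_eq_left (sub_nonneg.2 (le_max_left a t)),
        max_eq_left (sub_nonneg.2 (le_max_right a t)),
        show max a t - a - (max a t - t) = -(a - t) by ring, abs_neg]
    rw [← trunc_abs_eq a γ hγ, ← hz]
    exact le_ciSup ⟨|a - t|, Set.forall_mem_range.2 hb⟩ (max a t)

/-- If `Z` is a real random variable with exponential tail bound `ℙ(|Z| ≥ z) ≤ exp(-λz)` for all
`z ≥ z₀ > 0`, where `λ > 0`, then for every `γ ≥ z₀`,
`𝔼[ sup_z |(z - Z)₊ - (z - t_γ(Z))₊| ] ≤ exp(-λγ) / λ`,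
where `t_γ` is truncation at level `γ`. -/
theorem expected_truncation_error_exponential_tail
    {Ω : Type*} [MeasurableSpace Ω] (μ : Measure Ω) [IsProbabilityMeasure μ]
    (Z : Ω → ℝ) (hZ : Measurable Z) (z₀ lam : ℝ) (hz₀ : 0 < z₀) (hlam : 0 < lam)
    (htail : ∀ z, z₀ ≤ z → μ {ω | z ≤ |Z ω|} ≤ ENNReal.ofReal (Real.exp (-lam * z)))
    (γ : ℝ) (hγ : z₀ ≤ γ) :
    ∫ ω, (⨆ z : ℝ, |max (z - Z ω) 0 - max (z - min (max (-γ) (Z ω)) γ) 0|) ∂μ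
      ≤ Real.exp (-lam * γ) / lam := by
  have hγ0 : 0 < γ := hz₀.trans_le hγ
  have hrw : ∀ ω, (⨆ z : ℝ, |max (z - Z ω) 0 - max (z - min (max (-γ) (Z ω)) γ) 0|)
      = max (|Z ω| - γ) 0 := fun ω => sup_trunc_eq (Z ω) γ hγ0
  set f : Ω → ℝ := fun ω => max (|Z ω| - γ) 0 with hf
  have hfm : Measurable f := (hZ.abs.sub measurable_const).max measurable_const
  have hfnn : ∀ ω, 0 ≤ f ω := fun ω => le_max_right _ _
  calc ∫ ω, (⨆ z : ℝ, |max (z - Z ω) 0 - max (z - min (max (-γ) (Z ω)) γ) 0|) ∂μ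
      = ∫ ω, f ω ∂μ := by exact integral_congr_ae (Filter.Eventually.of_forall hrw)
    _ = (∫⁻ ω, ENNReal.ofReal (f ω) ∂μ).toReal :=
        integral_eq_lintegral_of_nonneg_ae (Filter.Eventually.of_forall hfnn)
          hfm.aestronglyMeasurable
    _ ≤ Real.exp (-lam * γ) / lam := by
        apply ENNReal.toReal_le_of_le_ofReal
          (by positivity)
        rw [lintegral_eq_lintegral_meas_lt μ (Filter.Eventually.of_forall hfnn) hfm.aemeasurable]
        have hkey : ∀ t ∈ Set.Ioi (0 : ℝ), μ {ω | t < f ω}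
            ≤ ENNReal.ofReal (Real.exp (-lam * (γ + t))) := by
          intro t ht
          refine le_trans (μ.mono ?_) (htail (γ + t) (by simp only [Set.mem_Ioi] at ht; linarith))
          intro ω hω
          simp only [Set.mem_setOf_eq, hf] at hω ⊢
          rcases max_cases (|Z ω| - γ) 0 with ⟨he, _⟩ | ⟨he, _⟩ <;>
            simp only [Set.mem_Ioi] at ht <;> rw [he] at hω <;> linarith
        calc ∫⁻ t in Set.Ioi (0:ℝ), μ {ω | t < f ω}
            ≤ ∫⁻ t in Set.Ioi (0:ℝ), ENNReal.ofReal (Real.exp (-lam * (γ + t))) :=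
              setLIntegral_mono ((Real.measurable_exp.comp
                (measurable_const.mul (measurable_const.add measurable_id))).ennreal_ofReal) hkey
          _ = ENNReal.ofReal (∫ t in Set.Ioi (0:ℝ), Real.exp (-lam * (γ + t))) := by
              rw [← ofReal_integral_eq_lintegral_ofReal]
              · have : (fun t : ℝ => Real.exp (-lam * (γ + t)))
                    = fun t => Real.exp (-lam * γ) * Real.exp (-lam * t) := by
                  funext t; rw [← Real.exp_add]; ring_nf
                rw [this]
                exact (exp_neg_integrableOn_Ioi 0 hlam).const_mul _
              · exact Filter.Eventually.of_forall fun t => (Real.exp_pos _).le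
          _ ≤ ENNReal.ofReal (Real.exp (-lam * γ) / lam) := by
              apply ENNReal.ofReal_le_ofReal
              have h1 : ∀ t : ℝ, Real.exp (-lam * (γ + t))
                  = Real.exp (-lam * γ) * Real.exp (-(lam * t)) := by
                intro t; rw [← Real.exp_add]; ring_nf
              simp_rw [h1]
              rw [MeasureTheory.integral_const_mul]
              have h2 : (∫ t in Set.Ioi (0:ℝ), Real.exp (-(lam * t))) = lam⁻¹ := by
                rw [integral_comp_mul_left_Ioi (fun x => Real.exp (-x)) 0 hlam, mul_zero,
                  integral_exp_neg_Ioi_zero, smul_eq_mul, mul_one]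
              rw [h2, div_eq_mul_inv]
end

section
/- Let a < b be real numbers, z₁, …, z_k ∈ [a, b], and for each i let F_i : ℝ → [0, 1] be an increasing right-continuous function with F_i(s) = 0 for s < a and F_i(s) = 1 for s ≥ b. Then for every y ∈ ℝ, | Σ_{i=1}^k [ (y − z_i)_+ − ∫_a^y F_i(s) ds ] | ≤ (b − a) · sup_{u ∈ ℝ} | Σ_{i=1}^k [ 𝟙{z_i ≤ u} − F_i(u) ] |, where for y < a the integral ∫_a^y F_i(s) ds is interpreted as 0. -/
/-!
The right derivative of `s ↦ (s - z)₊` is `𝟙{z ≤ s}`, so for `z ≥ a` the stop-loss term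
`(y - z)₊` equals `∫_a^y 𝟙{z ≤ s} ds`. Hence the sum on the left is `∫_a^y G`, where
`G u = Σ_i (𝟙{z_i ≤ u} - F_i u)` is the empirical CDF process. `G` vanishes off `[a, b]`,
so its integral over any interval starting at `a` is at most `(b - a) · sup |G|`.
-/

open MeasureTheory intervalIntegral Set
open scoped Interval

lemma monotone_ite_le_one_zero (z : ℝ) :
    Monotone fun s : ℝ => if z ≤ s then (1 : ℝ) else 0 := by
  intro s t hst
  dsimp only
  split_ifs <;> grind

lemma hasDerivWithinAt_max_sub_zero_Ioi (z x : ℝ) :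
    HasDerivWithinAt (fun s => max (s - z) 0) (if z ≤ x then 1 else 0) (Ioi x) x := by
  split_ifs with hzx
  · exact ((hasDerivAt_id x).sub_const z).hasDerivWithinAt.congr
      (fun s hs => max_eq_left (by linarith [mem_Ioi.mp hs])) (max_eq_left (by linarith))
  · have hzero : (fun s => max (s - z) 0) =ᶠ[nhds x] fun _ => (0 : ℝ) := by
      filter_upwards [Iio_mem_nhds (not_le.mp hzx)] with s hs
      exact max_eq_right (by linarith [mem_Iio.mp hs])
    exact ((hasDerivAt_const x (0 : ℝ)).congr_of_eventuallyEq hzero).hasDerivWithinAt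

lemma integral_ite_le_eq_max_sub {a z : ℝ} (haz : a ≤ z) (y : ℝ) :
    ∫ s in a..y, (if z ≤ s then (1 : ℝ) else 0) = max (y - z) 0 := by
  rw [integral_eq_sub_of_hasDeriv_right (f := fun s => max (s - z) 0)
    (by fun_prop) (fun x _ => hasDerivWithinAt_max_sub_zero_Ioi z x)
    (monotone_ite_le_one_zero z).intervalIntegrable,
    max_eq_right (a := a - z) (by linarith), sub_zero]

lemma norm_integral_le_of_support_subset_Icc {E : Type*} [NormedAddCommGroup E]
    [NormedSpace ℝ E] {f : ℝ → E} {a b C : ℝ} (hab : a ≤ b)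
    (hf : Function.support f ⊆ Icc a b) (hC : ∀ x, ‖f x‖ ≤ C) (y : ℝ) :
    ‖∫ x in a..y, f x‖ ≤ C * (b - a) := by
  have hC0 : 0 ≤ C := (norm_nonneg _).trans (hC a)
  calc ‖∫ x in a..y, f x‖ = ‖∫ x in Ι a y ∩ Icc a b, f x‖ := by
        rw [norm_integral_eq_norm_integral_uIoc, ← setIntegral_indicator measurableSet_Icc,
          indicator_eq_self.mpr hf]
    _ ≤ C * volume.real (Ι a y ∩ Icc a b) :=
        norm_setIntegral_le_of_norm_le_const
          (measure_inter_lt_top_of_right_ne_top measure_Icc_lt_top.ne) fun x _ => hC x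
    _ ≤ C * (b - a) := by
        rw [← Real.volume_real_Icc_of_le hab]
        gcongr
        exacts [measure_Icc_lt_top.ne, inter_subset_right]

lemma ite_le_sub_eq_zero_of_notMem_Icc {a b z : ℝ} {F : ℝ → ℝ} (hz : z ∈ Icc a b)
    (hF_lo : ∀ s, s < a → F s = 0) (hF_hi : ∀ s, b ≤ s → F s = 1) {s : ℝ}
    (hs : s ∉ Icc a b) : (if z ≤ s then (1 : ℝ) else 0) - F s = 0 := by
  rcases not_and_or.mp hs with hsa | hsb
  · rw [not_le] at hsa
    rw [if_neg (by linarith [hz.1]), hF_lo s hsa, sub_zero]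
  · have hbs : b ≤ s := (not_le.mp hsb).le
    rw [if_pos (hz.2.trans hbs), hF_hi s hbs, sub_self]

lemma abs_ite_le_sub_le_one (z s : ℝ) {p : ℝ} (hp : p ∈ Icc (0 : ℝ) 1) :
    |(if z ≤ s then (1 : ℝ) else 0) - p| ≤ 1 := by
  rw [abs_sub_le_iff]
  constructor <;> split_ifs <;> linarith [hp.1, hp.2]

theorem stop_loss_ecdf_reduction_general
    (k : ℕ) (a b : ℝ) (hab : a < b)
    (z : Fin k → ℝ) (hz : ∀ i, z i ∈ Set.Icc a b)
    (F : Fin k → ℝ → ℝ)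
    (hF_mono : ∀ i, Monotone (F i))
    (hF_range : ∀ i s, F i s ∈ Set.Icc (0 : ℝ) 1)
    (hF_lo : ∀ i s, s < a → F i s = 0)
    (hF_hi : ∀ i s, b ≤ s → F i s = 1) :
    ∀ y : ℝ,
      |∑ i, (max (y - z i) 0 - ∫ s in a..y, F i s)|
        ≤ (b - a) * ⨆ u : ℝ, |∑ i, ((if z i ≤ u then (1 : ℝ) else 0) - F i u)| := by
  intro y
  set g : ℝ → ℝ := fun u => ∑ i, ((if z i ≤ u then (1 : ℝ) else 0) - F i u)
  have hind_int (i : Fin k) :=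
    (monotone_ite_le_one_zero (z i)).intervalIntegrable (μ := volume) (a := a) (b := y)
  have hF_int (i : Fin k) := (hF_mono i).intervalIntegrable (μ := volume) (a := a) (b := y)
  have hsum : ∑ i, (max (y - z i) 0 - ∫ s in a..y, F i s) = ∫ s in a..y, g s := by
    rw [integral_finsetSum fun i _ => (hind_int i).sub (hF_int i)]
    refine Finset.sum_congr rfl fun i _ => ?_
    rw [integral_sub (hind_int i) (hF_int i), integral_ite_le_eq_max_sub (hz i).1]
  have hg_supp : Function.support g ⊆ Icc a b := Function.support_subset_iff'.mpr fun u hu =>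
    Finset.sum_eq_zero fun i _ => ite_le_sub_eq_zero_of_notMem_Icc (hz i) (hF_lo i) (hF_hi i) hu
  have hg_bound (u : ℝ) : |g u| ≤ k := by
    refine (Finset.abs_sum_le_sum_abs _ _).trans ?_
    refine (Finset.sum_le_sum (s := Finset.univ) fun i _ =>
      abs_ite_le_sub_le_one (z i) u (hF_range i u)).trans_eq ?_
    simp
  have hg_le_sup (u : ℝ) : ‖g u‖ ≤ ⨆ u, |g u| :=
    le_ciSup (f := fun u => |g u|) ⟨k, forall_mem_range.2 hg_bound⟩ u
  rw [hsum, mul_comm]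
  exact norm_integral_le_of_support_subset_Icc hab.le hg_supp hg_le_sup y

/-- Pathwise reduction of the empirical stop-loss process to the empirical CDF process:
if `z 1, …, z k ∈ [a, b]` and each `F i` is an increasing right-continuous function with
`F i s = 0` for `s < a` and `F i s = 1` for `s ≥ b`, taking values in `[0,1]`, then for every `y`,
`|Σ_i [(y - z i)₊ - ∫_a^y F i]| ≤ (b - a) · sup_u |Σ_i [𝟙{z i ≤ u} - F i u]|`. -/
theorem stop_loss_ecdf_reduction
    (k : ℕ) (a b : ℝ) (hab : a < b)
    (z : Fin k → ℝ) (hz : ∀ i, z i ∈ Set.Icc a b)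
    (F : Fin k → ℝ → ℝ)
    (hF_mono : ∀ i, Monotone (F i))
    (hF_rc : ∀ i u, ContinuousWithinAt (F i) (Set.Ici u) u)
    (hF_range : ∀ i s, F i s ∈ Set.Icc (0 : ℝ) 1)
    (hF_lo : ∀ i s, s < a → F i s = 0)
    (hF_hi : ∀ i s, b ≤ s → F i s = 1) :
    ∀ y : ℝ,
      |∑ i, (max (y - z i) 0 - ∫ s in a..y, F i s)|
        ≤ (b - a) * ⨆ u : ℝ, |∑ i, ((if z i ≤ u then (1 : ℝ) else 0) - F i u)| :=
  stop_loss_ecdf_reduction_general k a b hab z hz F hF_mono hF_range hF_lo hF_hi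
end

section
/- Let d ∈ ℕ, w₁, …, w_d > 0, and let h₁, …, h_d : ℝ → ℝ be functions each of the form h_s(y) = (1/m_s) Σ_{j=1}^{m_s} (y − y_{s,j})_+ for finitely many reals y_{s,j}. Let y₁ = min and y_m = max of all the y_{s,j}. For i = 1, …, d define the min-max antitonic regression M̃_i(y) = min_{1 ≤ k ≤ i} max_{k ≤ j ≤ d} [ Σ_{s=k}^j w_s h_s(y) ] / [ Σ_{s=k}^j w_s ]. Then: (a) for each i, M̃_i is increasing in y and 1-Lipschitz, i.e. 0 ≤ M̃_i(y + t) − M̃_i(y) ≤ t for all y ∈ ℝ and t > 0; (b) for each fixed y, M̃_i(y) is decreasing in i; (c) M̃_i(y) = 0 for all y ≤ y₁; and (d) M̃_i(y_m + t) = M̃_i(y_m) + t for all t > 0. -/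
/-!
The min-max regression `Φᵢ(v) = min_{k ≤ i} max_{j ≥ k} mean_{[k, j]}(w, v)` is a monotone,
translation-equivariant functional of the vector `v`, with `Φᵢ(0) = 0`: weighted means with positive
weights have these properties and finite minima and maxima preserve them. Hence everything reduces
to pointwise facts about the stop-loss functions: `y ↦ (y - a)₊` is increasing, grows by at most
`t` over a step `t`, vanishes for `y ≤ a` and grows by exactly `t` for `y ≥ a`.
-/

open Finset

noncomputable section

def weightedMean {ι : Type*} (w : ι → ℝ) (s : Finset ι) (v : ι → ℝ) : ℝ :=
  (∑ i ∈ s, w i * v i) / ∑ i ∈ s, w i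

section WeightedMean

variable {ι : Type*} {w : ι → ℝ} {s : Finset ι} {v v' : ι → ℝ}

theorem weightedMean_mono (hw : ∀ i ∈ s, 0 ≤ w i) (hv : ∀ i ∈ s, v i ≤ v' i) :
    weightedMean w s v ≤ weightedMean w s v' :=
  div_le_div_of_nonneg_right (sum_le_sum fun i hi => mul_le_mul_of_nonneg_left (hv i hi) (hw i hi))
    (sum_nonneg hw)

theorem weightedMean_add_const (hw : ∑ i ∈ s, w i ≠ 0) (c : ℝ) :
    weightedMean w s (fun i => v i + c) = weightedMean w s v + c := by
  simp only [weightedMean, mul_add, sum_add_distrib, ← sum_mul, add_div, mul_div_cancel_left₀ c hw]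

@[simp]
theorem weightedMean_zero : weightedMean w s 0 = 0 := by
  simp [weightedMean]

end WeightedMean

theorem Finset.sup'_add_const {α β : Type*} [Lattice α] [AddGroup α] [AddRightMono α]
    {s : Finset β} (hs : s.Nonempty) (f : β → α) (c : α) :
    s.sup' hs (fun b => f b + c) = s.sup' hs f + c :=
  (apply_sup'_eq_sup'_comp hs (· + c) fun x y => sup_add x y c).symm

theorem Finset.inf'_add_const {α β : Type*} [Lattice α] [AddGroup α] [AddRightMono α]
    {s : Finset β} (hs : s.Nonempty) (f : β → α) (c : α) :
    s.inf' hs (fun b => f b + c) = s.inf' hs f + c :=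
  (apply_inf'_eq_inf'_comp hs (· + c) fun x y => inf_add x y c).symm

def minMaxRegression {ι : Type*} [Preorder ι] [LocallyFiniteOrder ι] [LocallyFiniteOrderBot ι]
    [LocallyFiniteOrderTop ι] (w : ι → ℝ) (i : ι) (v : ι → ℝ) : ℝ :=
  (Iic i).inf' nonempty_Iic fun k => (Ici k).sup' nonempty_Ici fun j => weightedMean w (Icc k j) v

section MinMaxRegression

variable {ι : Type*} [Preorder ι] [LocallyFiniteOrder ι] [LocallyFiniteOrderBot ι]
  [LocallyFiniteOrderTop ι] {w : ι → ℝ} {v v' : ι → ℝ}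

theorem minMaxRegression_mono (hw : ∀ s, 0 ≤ w s) (hv : v ≤ v') (i : ι) :
    minMaxRegression w i v ≤ minMaxRegression w i v' :=
  inf'_mono_fun fun _ _ => sup'_mono_fun fun _ _ =>
    weightedMean_mono (fun s _ => hw s) fun s _ => hv s

theorem minMaxRegression_add_const (hw : ∀ s, 0 < w s) (i : ι) (c : ℝ) :
    minMaxRegression w i (fun s => v s + c) = minMaxRegression w i v + c := by
  have hmean : ∀ k, ∀ j ∈ Ici k, weightedMean w (Icc k j) (fun s => v s + c) =
      weightedMean w (Icc k j) v + c := fun k j hj =>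
    weightedMean_add_const (sum_pos (fun s _ => hw s) (nonempty_Icc.2 (mem_Ici.1 hj))).ne' c
  simp only [minMaxRegression, sup'_congr nonempty_Ici rfl (hmean _), sup'_add_const,
    inf'_add_const]

@[simp]
theorem minMaxRegression_zero (i : ι) : minMaxRegression w i 0 = 0 := by
  simp [minMaxRegression]

theorem antitone_minMaxRegression (v : ι → ℝ) : Antitone fun i => minMaxRegression w i v :=
  fun _ _ hij => inf'_mono _ (Iic_subset_Iic.2 hij) nonempty_Iic

end MinMaxRegression

def empiricalStopLoss {m : ℕ} (a : Fin m → ℝ) (y : ℝ) : ℝ :=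
  (1 / (m : ℝ)) * ∑ j, max (y - a j) 0

section EmpiricalStopLoss

variable {m : ℕ} (a : Fin m → ℝ)

theorem one_div_mul_sum_add_const (hm : m ≠ 0) (g : Fin m → ℝ) (c : ℝ) :
    1 / (m : ℝ) * ∑ j, (g j + c) = 1 / (m : ℝ) * ∑ j, g j + c := by
  rw [sum_add_distrib, sum_const, card_univ, Fintype.card_fin, nsmul_eq_mul]
  field_simp

theorem monotone_empiricalStopLoss : Monotone (empiricalStopLoss a) := fun y y' hy => by
  unfold empiricalStopLoss
  gcongr

theorem empiricalStopLoss_add_le (hm : m ≠ 0) (y : ℝ) {t : ℝ} (ht : 0 ≤ t) :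
    empiricalStopLoss a (y + t) ≤ empiricalStopLoss a y + t :=
  calc empiricalStopLoss a (y + t)
      ≤ 1 / (m : ℝ) * ∑ j, (max (y - a j) 0 + t) := by
        unfold empiricalStopLoss
        gcongr with j
        exact max_le (by linarith [le_max_left (y - a j) 0]) (add_nonneg (le_max_right _ _) ht)
    _ = empiricalStopLoss a y + t := one_div_mul_sum_add_const hm _ t

theorem empiricalStopLoss_eq_zero {y : ℝ} (hy : ∀ j, y ≤ a j) : empiricalStopLoss a y = 0 := by
  simp [empiricalStopLoss, sub_nonpos.2 (hy _)]

theorem empiricalStopLoss_add_of_le (hm : m ≠ 0) {y : ℝ} (hy : ∀ j, a j ≤ y) {t : ℝ}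
    (ht : 0 ≤ t) : empiricalStopLoss a (y + t) = empiricalStopLoss a y + t := by
  rw [empiricalStopLoss, empiricalStopLoss, ← one_div_mul_sum_add_const hm]
  congr 1
  refine sum_congr rfl fun j _ => ?_
  rw [max_eq_left (by linarith [hy j]), max_eq_left (sub_nonneg.2 (hy j))]
  ring

end EmpiricalStopLoss

end

theorem minmax_antitonic_regression_properties_general
    (d : ℕ) (w : Fin d → ℝ) (hw : ∀ s, 0 < w s)
    (m : Fin d → ℕ) (hm : ∀ s, 0 < m s)
    (yv : (s : Fin d) → Fin (m s) → ℝ)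
    (h : Fin d → ℝ → ℝ)
    (hh : ∀ s y, h s y = (1 / (m s : ℝ)) * ∑ j, max (y - yv s j) 0)
    (y₁ ym : ℝ)
    (hy₁ : IsLeast {v | ∃ s j, v = yv s j} y₁)
    (hym : IsGreatest {v | ∃ s j, v = yv s j} ym)
    (Mt : Fin d → ℝ → ℝ)
    (hMt : ∀ i y, Mt i y =
      (Finset.Iic i).inf' Finset.nonempty_Iic fun k =>
        (Finset.Ici k).sup' Finset.nonempty_Ici fun j =>
          (∑ s ∈ Finset.Icc k j, w s * h s y) / ∑ s ∈ Finset.Icc k j, w s) :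
    (∀ i y t, 0 < t → 0 ≤ Mt i (y + t) - Mt i y ∧ Mt i (y + t) - Mt i y ≤ t) ∧
    (∀ y, Antitone fun i => Mt i y) ∧
    (∀ i y, y ≤ y₁ → Mt i y = 0) ∧
    (∀ i t, 0 < t → Mt i (ym + t) = Mt i ym + t) := by
  obtain rfl : h = fun s => empiricalStopLoss (yv s) := funext fun s => funext (hh s)
  have hMt' : ∀ i y, Mt i y = minMaxRegression w i fun s => empiricalStopLoss (yv s) y := hMt
  simp only [hMt']
  have hw₀ : ∀ s, 0 ≤ w s := fun s => (hw s).le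
  have hm₀ : ∀ s, m s ≠ 0 := fun s => (hm s).ne'
  refine ⟨fun i y t ht => ?_, fun y => antitone_minMaxRegression _, fun i y hy => ?_,
    fun i t ht => ?_⟩
  · have hmono := minMaxRegression_mono hw₀
      (fun s => monotone_empiricalStopLoss (yv s) (le_add_of_nonneg_right (a := y) ht.le)) i
    have hlip := minMaxRegression_mono hw₀
      (fun s => empiricalStopLoss_add_le (yv s) (hm₀ s) y ht.le) i
    rw [minMaxRegression_add_const hw] at hlip
    constructor <;> linarith
  · have hzero : (fun s => empiricalStopLoss (yv s) y) = 0 := funext fun s =>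
      empiricalStopLoss_eq_zero _ fun j => hy.trans (hy₁.2 ⟨s, j, rfl⟩)
    rw [hzero, minMaxRegression_zero]
  · rw [← minMaxRegression_add_const hw]
    congr 1
    funext s
    exact empiricalStopLoss_add_of_le _ (hm₀ s) (fun j => hym.2 ⟨s, j, rfl⟩) ht.le

/-- Properties of the min-max antitonic regression of empirical stop-loss functions:
with positive weights `w s` and group stop-loss functions
`h s y = (1/m s) Σ_j (y - yv s j)₊`, the min-max antitonic regression
`M̃ i y = min_{k ≤ i} max_{j ≥ k} (Σ_{s=k}^j w s · h s y) / (Σ_{s=k}^j w s)` is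
(a) increasing and 1-Lipschitz in `y`, (b) decreasing in `i`, (c) zero for `y ≤ y₁` (the minimum
of all observations), and (d) satisfies `M̃ i (y_m + t) = M̃ i y_m + t` for `t > 0`, where `y_m`
is the maximum of all observations. -/
theorem minmax_antitonic_regression_properties
    (d : ℕ) [NeZero d] (w : Fin d → ℝ) (hw : ∀ s, 0 < w s)
    (m : Fin d → ℕ) (hm : ∀ s, 0 < m s)
    (yv : (s : Fin d) → Fin (m s) → ℝ)
    (h : Fin d → ℝ → ℝ)
    (hh : ∀ s y, h s y = (1 / (m s : ℝ)) * ∑ j, max (y - yv s j) 0)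
    (y₁ ym : ℝ)
    (hy₁ : IsLeast {v | ∃ s j, v = yv s j} y₁)
    (hym : IsGreatest {v | ∃ s j, v = yv s j} ym)
    (Mt : Fin d → ℝ → ℝ)
    (hMt : ∀ i y, Mt i y =
      (Finset.Iic i).inf' Finset.nonempty_Iic fun k =>
        (Finset.Ici k).sup' Finset.nonempty_Ici fun j =>
          (∑ s ∈ Finset.Icc k j, w s * h s y) / ∑ s ∈ Finset.Icc k j, w s) :
    (∀ i y t, 0 < t → 0 ≤ Mt i (y + t) - Mt i y ∧ Mt i (y + t) - Mt i y ≤ t) ∧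
    (∀ y, Antitone fun i => Mt i y) ∧
    (∀ i y, y ≤ y₁ → Mt i y = 0) ∧
    (∀ i t, 0 < t → Mt i (ym + t) = Mt i ym + t) :=
  minmax_antitonic_regression_properties_general d w hw m hm yv h hh y₁ ym hy₁ hym Mt hMt
end

section
/- Let a < b be real numbers and f : ℝ → ℝ a function that is increasing, 1-Lipschitz (0 ≤ f(y + t) − f(y) ≤ t for all y and t > 0), satisfies f(y) = 0 for y ≤ a, and satisfies f(b + t) = f(b) + t for all t > 0. Let g be the greatest convex minorant of f and let F(y) denote the right-hand derivative of g at y. Then F is the cumulative distribution function of a probability distribution on [a, b]: F is increasing, right-continuous, takes values in [0, 1], F(y) = 0 for y < a, and F(y) = 1 for y ≥ b. -/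
/-!
The right derivative of any convex function is increasing and right-continuous. The boundary
behaviour comes from pinning `g` down on both ends: `0` and the line `y ↦ y + f b - b` are convex
minorants of `f` that coincide with `f` on `(-∞, a]` and on `[b, ∞)` respectively, so `g` equals
`0` there and has slope `1` there.
-/

open Set Filter Topology

namespace ConvexOn

variable {S : Set ℝ} {g F : ℝ → ℝ}

theorem monotoneOn_of_hasDerivWithinAt_Ici (hg : ConvexOn ℝ S g) (hS : IsOpen S)
    (hF : ∀ y ∈ S, HasDerivWithinAt g (F y) (Ici y) y) : MonotoneOn F S := by
  have hF_eq : EqOn (fun y ↦ derivWithin g (Ioi y) y) F S := fun y hy ↦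
    ((hF y hy).mono Ioi_subset_Ici_self).derivWithin (uniqueDiffWithinAt_Ioi y)
  have h := hg.monotoneOn_rightDeriv
  rw [hS.interior_eq] at h
  exact h.congr hF_eq

theorem continuousWithinAt_Ici_of_hasDerivWithinAt_Ici (hg : ConvexOn ℝ S g) (hS : IsOpen S)
    (hF : ∀ y ∈ S, HasDerivWithinAt g (F y) (Ici y) y) {x : ℝ} (hx : x ∈ S) :
    ContinuousWithinAt F (Ici x) x := by
  refine tendsto_order.2 ⟨fun u hu ↦ ?_, fun u hu ↦ ?_⟩
  · filter_upwards [self_mem_nhdsWithin, mem_nhdsWithin_of_mem_nhds (hS.mem_nhds hx)]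
      with z hxz hzS
    exact hu.trans_le (hg.monotoneOn_of_hasDerivWithinAt_Ici hS hF hx hzS hxz)
  -- `F z ≤ slope g z w` for `x ≤ z < w`, and the right side tends to `slope g x w < u`.
  have hslope : Tendsto (slope g x) (𝓝[>] x) (𝓝 (F x)) :=
    (hasDerivWithinAt_iff_tendsto_slope' self_notMem_Ioi).mp
      ((hF x hx).mono Ioi_subset_Ici_self)
  obtain ⟨w, hwu, hxw, hwS⟩ := ((hslope.eventually (gt_mem_nhds hu)).and
    (eventually_mem_nhdsWithin.and (eventually_nhdsWithin_of_eventually_nhds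
      (hS.eventually_mem hx)))).exists
  have hcont : ContinuousAt (fun z ↦ slope g z w) x := by
    simp only [slope_def_field]
    exact ((continuousAt_const.sub ((hg.continuousOn hS).continuousAt (hS.mem_nhds hx))).div
      (continuousAt_const.sub continuousAt_id) (sub_ne_zero.2 (ne_of_gt hxw)))
  filter_upwards [nhdsWithin_le_nhds (hcont.eventually (gt_mem_nhds hwu)),
    nhdsWithin_le_nhds (Iio_mem_nhds hxw), self_mem_nhdsWithin] with z hzu hzw hxz
  have hzS : z ∈ S := hg.1.ordConnected.out hx hwS ⟨hxz, hzw.le⟩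
  exact (hg.le_slope_of_hasDerivWithinAt_Ioi hzS hwS hzw
    ((hF z hzS).mono Ioi_subset_Ici_self)).trans_lt hzu

end ConvexOn

theorem IsGCM.eq_of_convexOn_of_le {I : Set ℝ} {f g h : ℝ → ℝ} (hGCM : IsGCM I f g)
    (hh : ConvexOn ℝ I h) (hhf : ∀ x ∈ I, h x ≤ f x) {x : ℝ} (hx : x ∈ I) (hfx : f x ≤ h x) :
    g x = h x :=
  le_antisymm ((hGCM.2.1 x hx).trans hfx) (hGCM.2.2 h hh hhf x hx)

section UnitLipschitzIncreasing

variable {f : ℝ → ℝ}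

theorem le_and_sub_le_of_forall_pos
    (hf : ∀ y t : ℝ, 0 < t → 0 ≤ f (y + t) - f y ∧ f (y + t) - f y ≤ t) {x y : ℝ}
    (hxy : x ≤ y) : f x ≤ f y ∧ f y - f x ≤ y - x := by
  rcases hxy.eq_or_lt with rfl | hxy
  · simp
  · simpa using hf x (y - x) (sub_pos.2 hxy)

theorem nonneg_of_eq_zero_of_le
    (hf : ∀ y t : ℝ, 0 < t → 0 ≤ f (y + t) - f y ∧ f (y + t) - f y ≤ t) {a : ℝ}
    (hf_lo : ∀ y, y ≤ a → f y = 0) (y : ℝ) : 0 ≤ f y :=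
  (hf_lo _ (min_le_right y a)).symm.trans_le (le_and_sub_le_of_forall_pos hf (min_le_left y a)).1

theorem eq_add_of_le {b : ℝ} (hf_hi : ∀ t : ℝ, 0 < t → f (b + t) = f b + t) {y : ℝ}
    (hy : b ≤ y) : f y = y + (f b - b) := by
  rcases hy.eq_or_lt with rfl | hy
  · ring
  · linarith [add_sub_cancel b y ▸ hf_hi (y - b) (sub_pos.2 hy)]

theorem add_le_of_forall_pos
    (hf : ∀ y t : ℝ, 0 < t → 0 ≤ f (y + t) - f y ∧ f (y + t) - f y ≤ t) {b : ℝ}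
    (hf_hi : ∀ t : ℝ, 0 < t → f (b + t) = f b + t) (y : ℝ) : y + (f b - b) ≤ f y := by
  rcases le_total y b with hy | hy
  · linarith [(le_and_sub_le_of_forall_pos hf hy).2]
  · exact (eq_add_of_le hf_hi hy).ge

end UnitLipschitzIncreasing

theorem gcm_slope_is_cdf_general (a b : ℝ) (f g F : ℝ → ℝ)
    (hf_mono : ∀ y t : ℝ, 0 < t → 0 ≤ f (y + t) - f y ∧ f (y + t) - f y ≤ t)
    (hf_lo : ∀ y, y ≤ a → f y = 0)
    (hf_hi : ∀ t : ℝ, 0 < t → f (b + t) = f b + t)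
    (hGCM : IsGCM Set.univ f g)
    (hF : ∀ y, HasDerivWithinAt g (F y) (Set.Ici y) y) :
    Monotone F ∧ (∀ y, ContinuousWithinAt F (Set.Ici y) y) ∧
    (∀ y, F y ∈ Set.Icc (0 : ℝ) 1) ∧
    (∀ y, y < a → F y = 0) ∧ (∀ y, b ≤ y → F y = 1) := by
  have hF_mono : Monotone F := monotoneOn_univ.1 <|
    hGCM.1.monotoneOn_of_hasDerivWithinAt_Ici isOpen_univ fun y _ ↦ hF y
  have hline_convex : ConvexOn ℝ univ (fun y ↦ y + (f b - b)) :=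
    (convexOn_id convex_univ).add (convexOn_const _ convex_univ)
  have hg_zero : ∀ y, y ≤ a → g y = 0 := fun y hy ↦ hGCM.eq_of_convexOn_of_le
    (convexOn_const 0 convex_univ) (fun y _ ↦ nonneg_of_eq_zero_of_le hf_mono hf_lo y)
    (mem_univ y) (hf_lo y hy).le
  have hg_line : ∀ y, b ≤ y → g y = y + (f b - b) := fun y hy ↦ hGCM.eq_of_convexOn_of_le
    hline_convex (fun y _ ↦ add_le_of_forall_pos hf_mono hf_hi y) (mem_univ y)
    (eq_add_of_le hf_hi hy).le
  have hF_eq : ∀ y c, HasDerivWithinAt g c (Ici y) y → F y = c := fun y _ h ↦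
    (uniqueDiffWithinAt_Ici y).eq_deriv _ (hF y) h
  have hF_zero : ∀ y, y < a → F y = 0 := fun y hy ↦ hF_eq y 0 <|
    ((hasDerivAt_const y (0 : ℝ)).congr_of_eventuallyEq <|
      eventually_of_mem (Iic_mem_nhds hy) fun z hz ↦ hg_zero z hz).hasDerivWithinAt
  have hF_one : ∀ y, b ≤ y → F y = 1 := fun y hy ↦ hF_eq y 1 <|
    (((hasDerivAt_id y).add_const (f b - b)).hasDerivWithinAt).congr
      (fun z hz ↦ hg_line z (hy.trans hz)) (hg_line y hy)
  refine ⟨hF_mono, fun y ↦ hGCM.1.continuousWithinAt_Ici_of_hasDerivWithinAt_Ici isOpen_univ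
    (fun y _ ↦ hF y) (mem_univ y), fun y ↦ ⟨?_, ?_⟩, hF_zero, hF_one⟩
  · exact (hF_zero _ ((min_le_right y (a - 1)).trans_lt (sub_one_lt a))).symm.trans_le
      (hF_mono (min_le_left y (a - 1)))
  · exact (hF_mono (le_max_left y b)).trans_eq (hF_one _ (le_max_right y b))

/-- If `f : ℝ → ℝ` is increasing and 1-Lipschitz, vanishes on `(-∞, a]`, and grows with unit
slope beyond `b` (i.e. `f (b + t) = f b + t` for `t > 0`), then the right-hand derivative `F`
of the greatest convex minorant `g` of `f` is the CDF of a probability distribution on `[a, b]`: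
`F` is increasing, right-continuous, takes values in `[0, 1]`, vanishes left of `a`, and equals
`1` from `b` onwards. -/
theorem gcm_slope_is_cdf (a b : ℝ) (hab : a < b) (f g F : ℝ → ℝ)
    (hf_mono : ∀ y t : ℝ, 0 < t → 0 ≤ f (y + t) - f y ∧ f (y + t) - f y ≤ t)
    (hf_lo : ∀ y, y ≤ a → f y = 0)
    (hf_hi : ∀ t : ℝ, 0 < t → f (b + t) = f b + t)
    (hGCM : IsGCM Set.univ f g)
    (hF : ∀ y, HasDerivWithinAt g (F y) (Set.Ici y) y) :
    Monotone F ∧ (∀ y, ContinuousWithinAt F (Set.Ici y) y) ∧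
    (∀ y, F y ∈ Set.Icc (0 : ℝ) 1) ∧
    (∀ y, y < a → F y = 0) ∧ (∀ y, b ≤ y → F y = 1) :=
  gcm_slope_is_cdf_general a b f g F hf_mono hf_lo hf_hi hGCM hF
end

section
/- Deterministic core of the consistency transfer, integer lattice case: Let F : ℝ → [0, 1] be the cumulative distribution function of a probability distribution supported on ℤ (so F is constant on each interval [k, k+1), k ∈ ℤ), and let M(y) = ∫_{−∞}^y F(t) dt, which is finite for all y. Let M̃ : ℝ → ℝ satisfy sup_{y ∈ ℝ} |M̃(y) − M(y)| ≤ c for some c > 0, let M̂ be the greatest convex minorant of M̃, and define F̂(y) = M̂(⌊y⌋ + 1) − M̂(⌊y⌋) for y ∈ ℝ. Then sup_{y ∈ ℝ} |F̂(y) − F(y)| ≤ 2c. -/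
open MeasureTheory Filter

/-!
`M` is a primitive of the nondecreasing function `F`, hence convex. The convex function `M - c`
lies below `M̃`, so it lies below the greatest convex minorant `M̂`; together with `M̂ ≤ M̃ ≤ M + c`
this gives `|M̂ - M| ≤ c` everywhere. Since `F` is constant on `[k, k + 1)`, the increment
`M (k + 1) - M k` equals `F k`, and the increment of `M̂` over the same step is within `2c` of it.
-/

theorem IsGCM.abs_sub_le {I : Set ℝ} {f g h : ℝ → ℝ} {c : ℝ} (hg : IsGCM I f g)
    (hh : ConvexOn ℝ I h) (hfh : ∀ x ∈ I, |f x - h x| ≤ c) : ∀ x ∈ I, |g x - h x| ≤ c := by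
  intro x hx
  have h_sub_le_f : ∀ y ∈ I, h y - c ≤ f y := fun y hy => by
    linarith [(abs_le.mp (hfh y hy)).1]
  have h_sub_le_g : h x - c ≤ g x :=
    hg.2.2 (fun y => h y - c) (hh.sub (concaveOn_const c hh.1)) h_sub_le_f x hx
  have f_sub_h_le := (abs_le.mp (hfh x hx)).2
  rw [abs_le]
  constructor <;> linarith [hg.2.1 x hx]

theorem Monotone.convexOn_of_sub_eq_intervalIntegral {F G : ℝ → ℝ} (hF : Monotone F)
    (hG : ∀ x y, G y - G x = ∫ t in x..y, F t) : ConvexOn ℝ Set.univ G := by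
  have upper : ∀ x y, x ≤ y → G y - G x ≤ F y * (y - x) := fun x y hxy => by
    rw [hG, mul_comm, ← smul_eq_mul, ← intervalIntegral.integral_const]
    exact intervalIntegral.integral_mono_on hxy hF.intervalIntegrable intervalIntegrable_const
      fun t ht => hF ht.2
  have lower : ∀ x y, x ≤ y → F x * (y - x) ≤ G y - G x := fun x y hxy => by
    rw [hG, mul_comm, ← smul_eq_mul, ← intervalIntegral.integral_const]
    exact intervalIntegral.integral_mono_on hxy intervalIntegrable_const hF.intervalIntegrable
      fun t ht => hF ht.1
  refine convexOn_of_slope_mono_adjacent convex_univ fun {x y z} _ _ hxy hyz => ?_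
  calc (G y - G x) / (y - x) ≤ F y := by
        rw [div_le_iff₀ (sub_pos.mpr hxy)]; exact upper x y hxy.le
    _ ≤ (G z - G y) / (z - y) := by
        rw [le_div_iff₀ (sub_pos.mpr hyz)]; exact lower y z hyz.le

theorem intervalIntegral_unit_step_of_eq_floor {F : ℝ → ℝ} (hF : ∀ y : ℝ, F y = F (⌊y⌋ : ℝ))
    (k : ℤ) : ∫ t in (k : ℝ)..k + 1, F t = F k := by
  have hconst : ∀ t ∈ Set.Ioo (k : ℝ) (k + 1), F t = F k := fun t ht => by
    rw [hF t, Int.floor_eq_iff.mpr ⟨ht.1.le, ht.2⟩]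
  rw [intervalIntegral.integral_of_le (by linarith), integral_Ioc_eq_integral_Ioo,
    setIntegral_congr_fun measurableSet_Ioo hconst]
  simp

theorem consistency_transfer_integer_lattice_general
    (F M Mt Mh : ℝ → ℝ) (c : ℝ)
    (hF_mono : Monotone F)
    (hF_lattice : ∀ y : ℝ, F y = F (⌊y⌋ : ℝ))
    (hM_int : ∀ y : ℝ, IntegrableOn F (Set.Iic y))
    (hM : ∀ y : ℝ, M y = ∫ t in Set.Iic y, F t)
    (hMt : ∀ y, |Mt y - M y| ≤ c)
    (hGCM : IsGCM Set.univ Mt Mh) :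
    ∀ y : ℝ, |(Mh ((⌊y⌋ : ℝ) + 1) - Mh (⌊y⌋ : ℝ)) - F y| ≤ 2 * c := by
  intro y
  have hM_sub : ∀ x y, M y - M x = ∫ t in x..y, F t := fun x y => by
    rw [hM, hM, intervalIntegral.integral_Iic_sub_Iic (hM_int x) (hM_int y)]
  have hMh : ∀ x, |Mh x - M x| ≤ c := fun x =>
    hGCM.abs_sub_le (hF_mono.convexOn_of_sub_eq_intervalIntegral hM_sub)
      (fun x _ => hMt x) x trivial
  have hstep : M (⌊y⌋ + 1) - M ⌊y⌋ = F y := by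
    rw [hM_sub, intervalIntegral_unit_step_of_eq_floor hF_lattice, ← hF_lattice]
  calc |(Mh ((⌊y⌋ : ℝ) + 1) - Mh (⌊y⌋ : ℝ)) - F y|
      = |(Mh (⌊y⌋ + 1) - M (⌊y⌋ + 1)) - (Mh ⌊y⌋ - M ⌊y⌋)| := by rw [← hstep]; ring_nf
    _ ≤ |Mh (⌊y⌋ + 1) - M (⌊y⌋ + 1)| + |Mh ⌊y⌋ - M ⌊y⌋| := abs_sub _ _
    _ ≤ 2 * c := by linarith [hMh (⌊y⌋ + 1), hMh ⌊y⌋]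

/-- Deterministic core of the consistency transfer, integer lattice case: let `F` be the CDF of a
probability distribution supported on `ℤ` (so `F y = F ⌊y⌋` for all `y`) and
`M y = ∫_{-∞}^y F`, finite for all `y`. If `M̃` is uniformly within `c` of `M`, `M̂` is the
greatest convex minorant of `M̃`, and `F̂ y = M̂ (⌊y⌋ + 1) - M̂ ⌊y⌋`, then
`sup_y |F̂ y - F y| ≤ 2c`. -/
theorem consistency_transfer_integer_lattice
    (F M Mt Mh : ℝ → ℝ) (c : ℝ) (hc : 0 < c)
    (hF_mono : Monotone F)
    (hF_range : ∀ y, F y ∈ Set.Icc (0 : ℝ) 1)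
    (hF_bot : Tendsto F atBot (nhds 0))
    (hF_top : Tendsto F atTop (nhds 1))
    (hF_lattice : ∀ y : ℝ, F y = F (⌊y⌋ : ℝ))
    (hM_int : ∀ y : ℝ, IntegrableOn F (Set.Iic y))
    (hM : ∀ y : ℝ, M y = ∫ t in Set.Iic y, F t)
    (hMt : ∀ y, |Mt y - M y| ≤ c)
    (hGCM : IsGCM Set.univ Mt Mh) :
    ∀ y : ℝ, |(Mh ((⌊y⌋ : ℝ) + 1) - Mh (⌊y⌋ : ℝ)) - F y| ≤ 2 * c :=
  consistency_transfer_integer_lattice_general F M Mt Mh c hF_mono hF_lattice hM_int hM hMt hGCM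
end
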